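/- arXiv:math/0104111 — 3 statements merged into one kernel-verified Lean document; each statement's English description precedes it below -/
import Mathlib

section
/- Let B(x;t) be a formal power series in t with coefficients in R[x,x^{-1}], with B(x;0)=1, and suppose B is in fact a Laurent polynomial, i.e. B lies in R[x,x^{-1},t]. Let (B_0(t), B_+(x;t), B_-(x^{-1};t)) be the canonical factorization of B. Then B_+(x;t) is a polynomial in x with coefficients in R[[t]], B_-(x^{-1};t) is a polynomial in x^{-1} with coefficients in R[[t]], and each factor is algebraic: there exist nonzero polynomials P_0 in R[t][Y], P_+ in R[x,t][Y] and P_- in R[u,t][Y] such that P_0(B_0(t)) = 0, P_+(B_+(x;t)) = 0 and P_-(B_-(u;t)) = 0 (with u standing for x^{-1}). -/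
/-!
Comparing coefficients of `t ^ n` in `B = B₀ B₊ B₋`, where `B₀` and `B₋` start with `1` and only
involve powers `xⁱ` with `i ≤ 0`, shows by induction on `n` that `B₊` only involves `x⁰, …, x^d`
when `B` only involves `x^(-d), …, x^d`; symmetrically `B₋` only involves `x^(-d), …, x⁰`. Then
`x^d B = B₀ · B₊ · (x^d B₋)` is a factorization of polynomials in `x` over `ℝ[[t]]` whose left-hand
side has coefficients in `ℝ[t]`. Over an algebraic closure of the fraction field of `ℝ[[t]]`, the
roots of `B₊` and of `x^d B₋` are roots of `x^d B`, hence algebraic over `ℝ[t]`; together with the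
normalisations `B₊(0) = 1` and `[x⁰] B₋ = 1` this makes all their coefficients algebraic, and
comparing one coefficient makes `B₀` algebraic. Finally `B₊ = ∑ cᵢ xⁱ` is algebraic over
`ℝ[x, t]` and `B₋ = u^d ∑ cᵢ' xⁱ`, with `x = u⁻¹`, is algebraic over `ℝ[u, t]`.
-/

open scoped Classical

namespace SlitPlane

/-- The Laurent polynomial ring `ℝ[x, x⁻¹]`: monomial `i` stands for `x^i`. -/
abbrev E1 := AddMonoidAlgebra ℝ ℤ

/-- `(B₀, B₊, B₋)` is a canonical factorization of `B`. -/
def IsCanonicalFactorization (B : PowerSeries E1)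
    (B0 : PowerSeries ℝ) (Bp Bm : PowerSeries E1) : Prop :=
  B = PowerSeries.map (algebraMap ℝ E1) B0 * Bp * Bm ∧
  (∀ (n : ℕ) (i : ℤ), i < 0 → (PowerSeries.coeff n Bp).coeff i = 0) ∧
  (∀ (n : ℕ) (i : ℤ), 0 < i → (PowerSeries.coeff n Bm).coeff i = 0) ∧
  PowerSeries.coeff 0 B0 = 1 ∧
  PowerSeries.coeff 0 Bp = 1 ∧
  PowerSeries.coeff 0 Bm = 1 ∧
  (∀ n : ℕ, 1 ≤ n → (PowerSeries.coeff n Bp).coeff 0 = 0) ∧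
  (∀ n : ℕ, 1 ≤ n → (PowerSeries.coeff n Bm).coeff 0 = 0)

/-- Evaluation `ℝ[x,t] → ℝ[x,x⁻¹][[t]]` sending the variable `0` to `x` and the
variable `1` to `t`. -/
noncomputable def evalXT : MvPolynomial (Fin 2) ℝ →+* PowerSeries E1 :=
  MvPolynomial.eval₂Hom (algebraMap ℝ (PowerSeries E1))
    (fun j => if j = 0 then PowerSeries.C (AddMonoidAlgebra.single (1 : ℤ) 1)
              else PowerSeries.X)

/-- Evaluation `ℝ[u,t] → ℝ[x,x⁻¹][[t]]` sending the variable `0` to `u = x⁻¹` and the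
variable `1` to `t`. -/
noncomputable def evalUT : MvPolynomial (Fin 2) ℝ →+* PowerSeries E1 :=
  MvPolynomial.eval₂Hom (algebraMap ℝ (PowerSeries E1))
    (fun j => if j = 0 then PowerSeries.C (AddMonoidAlgebra.single (-1 : ℤ) 1)
              else PowerSeries.X)

end SlitPlane

open scoped Polynomial PowerSeries Pointwise

theorem PowerSeries.coeff_mem_of_coeff_mul_mem {A : Type*} [Ring A] {S : AddSubgroup A}
    {U : Set A} (hSU : ∀ a ∈ S, ∀ b ∈ U, a * b ∈ S) {P Q : A⟦X⟧}
    (hQ₀ : coeff 0 Q = 1) (hQ : ∀ n, coeff n Q ∈ U) (hPQ : ∀ n, coeff n (P * Q) ∈ S)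
    (n : ℕ) : coeff n P ∈ S := by
  induction n using Nat.strong_induction_on with
  | _ n ih =>
    have h := hPQ n
    rw [coeff_mul, Finset.Nat.sum_antidiagonal_eq_sum_range_succ (fun i j => coeff i P * coeff j Q),
      Finset.sum_range_succ, Nat.sub_self, hQ₀, mul_one] at h
    simpa using S.sub_mem h (S.sum_mem fun k hk =>
      hSU _ (ih k (Finset.mem_range.mp hk)) _ (hQ (n - k)))

theorem AddMonoidAlgebra.mul_mem_supported_add {R G : Type*} [CommSemiring R] [Add G]
    {s t : Set G} {f g : AddMonoidAlgebra R G} (hf : f ∈ supported R R s)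
    (hg : g ∈ supported R R t) : f * g ∈ supported R R (s + t) := by
  classical
  rw [mem_supported] at hf hg ⊢
  exact (Finset.coe_subset.mpr (support_coeff_mul_subset f g)).trans
    (by simpa [Finset.coe_add] using Set.add_subset_add hf hg)

theorem AddMonoidAlgebra.single_mem_supported {R G : Type*} [CommSemiring R] {s : Set G} {a : G}
    (r : R) (h : a ∈ s) : single a r ∈ supported R R s :=
  Finsupp.single_mem_supported R r h

theorem PowerSeries.coeff_mem_supported_of_coeff_mul_mem {R G : Type*} [CommRing R] [AddMonoid G]
    {s t : Set G} (hst : s + t ⊆ s) {P Q : (AddMonoidAlgebra R G)⟦X⟧} (hQ₀ : coeff 0 Q = 1)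
    (hQ : ∀ n, coeff n Q ∈ AddMonoidAlgebra.supported R R t)
    (hPQ : ∀ n, coeff n (P * Q) ∈ AddMonoidAlgebra.supported R R s) (n : ℕ) :
    coeff n P ∈ AddMonoidAlgebra.supported R R s :=
  coeff_mem_of_coeff_mul_mem (S := (AddMonoidAlgebra.supported R R s).toAddSubgroup)
    (fun _ ha _ hb => AddMonoidAlgebra.supported_mono hst
      (AddMonoidAlgebra.mul_mem_supported_add ha hb)) hQ₀ hQ hPQ n

theorem Polynomial.isAlgebraic_aeval {R K T : Type*} [CommRing R] [IsDomain R] [CommRing K]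
    [CommRing T] [Algebra R T] [Algebra K T] {y : T} (hy : IsAlgebraic R y) {p : K[X]}
    (hp : ∀ i, IsAlgebraic R (algebraMap K T (p.coeff i))) : IsAlgebraic R (aeval y p) := by
  rw [aeval_eq_sum_range]
  refine Subalgebra.sum_mem (Subalgebra.algebraicClosure R T) fun i _ => ?_
  rw [Algebra.smul_def]
  exact (hp i).mul (hy.pow i)

/-- Over an algebraically closed field, `W = c ∏ (X - r)` with every root `r` algebraic (it is a
root of `H`), and `c` is pinned down by the algebraic nonzero coefficient `W.coeff i₀`. -/
theorem Polynomial.isAlgebraic_coeff_of_dvd_map {A L : Type*} [CommRing A] [IsDomain A] [Field L]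
    [IsAlgClosed L] [Algebra A L] {H : A[X]} (hH : H ≠ 0) {W : L[X]}
    (hW : W ∣ H.map (algebraMap A L)) {i₀ : ℕ} (hi₀ : W.coeff i₀ ≠ 0)
    (halg : IsAlgebraic A (W.coeff i₀)) (i : ℕ) : IsAlgebraic A (W.coeff i) := by
  set S := Subalgebra.algebraicClosure A L
  have hW0 : W ≠ 0 := fun h => hi₀ (by simp [h])
  set G := (W.roots.map fun a => X - C a).prod
  have hG : G ∈ lifts (algebraMap S L) := by
    refine multiset_prod_mem _ fun q hq => ?_
    obtain ⟨r, hr, rfl⟩ := Multiset.mem_map.mp hq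
    have hrS : r ∈ S := ⟨H, hH, by
      rw [aeval_def, eval₂_eq_eval_map]
      exact eval_eq_zero_of_dvd_of_eval_eq_zero hW ((mem_roots hW0).mp hr)⟩
    exact (mem_lifts _).mpr ⟨X - C ⟨r, hrS⟩, by simp⟩
  have hGcoeff (k : ℕ) : IsAlgebraic A (G.coeff k) := by
    obtain ⟨c, hc⟩ := (lifts_iff_coeff_lifts G).mp hG k
    rw [← hc]
    exact c.2
  have hWG : W = C W.leadingCoeff * G := (IsAlgClosed.splits W).eq_prod_roots
  have hlc : W.leadingCoeff = W.coeff i₀ * (G.coeff i₀)⁻¹ := by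
    have h : W.coeff i₀ = W.leadingCoeff * G.coeff i₀ := by
      conv_lhs => rw [hWG, coeff_C_mul]
    rw [h, mul_inv_cancel_right₀ fun h0 => hi₀ (by rw [h, h0, mul_zero])]
  rw [hWG, coeff_C_mul, hlc]
  exact (halg.mul (hGcoeff i₀).inv).mul (hGcoeff i)

/-- Both factors divide `H` in the algebraic closure of the fraction field of `K`, and `b` is a
coefficient of `H` divided by the leading coefficient of `P * Q`. -/
theorem Polynomial.isAlgebraic_of_map_eq_C_mul_mul {A K : Type*} [CommRing A] [IsDomain A]
    [CommRing K] [IsDomain K] [Algebra A K] {H : A[X]} (hH : H ≠ 0) {b : K} {P Q : K[X]}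
    (hfac : H.map (algebraMap A K) = C b * P * Q) {i j : ℕ} (hP : P.coeff i = 1)
    (hQ : Q.coeff j = 1) :
    IsAlgebraic A b ∧ (∀ k, IsAlgebraic A (P.coeff k)) ∧ ∀ k, IsAlgebraic A (Q.coeff k) := by
  let L := AlgebraicClosure (FractionRing K)
  have hinj : Function.Injective (algebraMap K L) :=
    (algebraMap (FractionRing K) L).injective.comp (IsFractionRing.injective K (FractionRing K))
  have hfacL : H.map (algebraMap A L) = C (algebraMap K L b) * P.map (algebraMap K L) *
      Q.map (algebraMap K L) := by
    rw [IsScalarTower.algebraMap_eq A K L, ← map_map, hfac]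
    simp only [Polynomial.map_mul, map_C]
  have hP' (k : ℕ) : IsAlgebraic A ((P.map (algebraMap K L)).coeff k) :=
    isAlgebraic_coeff_of_dvd_map hH (i₀ := i) ⟨C (algebraMap K L b) * Q.map (algebraMap K L),
      by rw [hfacL]; ring⟩ (by simp [hP]) (by simpa [hP] using isAlgebraic_one) k
  have hQ' (k : ℕ) : IsAlgebraic A ((Q.map (algebraMap K L)).coeff k) :=
    isAlgebraic_coeff_of_dvd_map hH (i₀ := j) ⟨C (algebraMap K L b) * P.map (algebraMap K L),
      by rw [hfacL]; ring⟩ (by simp [hQ]) (by simpa [hQ] using isAlgebraic_one) k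
  simp only [coeff_map, isAlgebraic_algebraMap_iff hinj] at hP' hQ'
  refine ⟨?_, hP', hQ'⟩
  set F := P * Q
  have hF : F ≠ 0 := mul_ne_zero (fun h => by simp [h] at hP) (fun h => by simp [h] at hQ)
  have hFalg : IsAlgebraic A (algebraMap K L F.leadingCoeff) := by
    rw [isAlgebraic_algebraMap_iff hinj, leadingCoeff, coeff_mul]
    exact Subalgebra.sum_mem (Subalgebra.algebraicClosure A K) fun p _ => (hP' p.1).mul (hQ' p.2)
  have hb : algebraMap K L b =
      algebraMap A L (H.coeff F.natDegree) * (algebraMap K L F.leadingCoeff)⁻¹ := by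
    rw [eq_mul_inv_iff_mul_eq₀ ((map_ne_zero_iff _ hinj).mpr (leadingCoeff_ne_zero.mpr hF)),
      IsScalarTower.algebraMap_apply A K L, ← coeff_map, hfac, mul_assoc, coeff_C_mul, map_mul]
    rfl
  rw [← isAlgebraic_algebraMap_iff hinj, hb]
  exact (isAlgebraic_algebraMap _).mul hFalg.inv

namespace SlitPlane

open AddMonoidAlgebra

theorem IsCanonicalFactorization.coeff_mem_supported {B : PowerSeries E1} {B0 : PowerSeries ℝ}
    {Bp Bm : PowerSeries E1} (hfact : IsCanonicalFactorization B B0 Bp Bm) {d : ℕ}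
    (hB : ∀ n, PowerSeries.coeff n B ∈ supported ℝ ℝ (Set.Icc (-d : ℤ) d)) :
    (∀ n, PowerSeries.coeff n Bp ∈ supported ℝ ℝ (Set.Icc (0 : ℤ) d)) ∧
      ∀ n, PowerSeries.coeff n Bm ∈ supported ℝ ℝ (Set.Icc (-d : ℤ) 0) := by
  obtain ⟨rfl, hBp_neg, hBm_pos, hB0, hBp0, hBm0, -, -⟩ := hfact
  have hBp (n : ℕ) : PowerSeries.coeff n Bp ∈ supported ℝ ℝ (Set.Ici 0) :=
    mem_supported'.mpr fun i hi => hBp_neg n i (by simpa using hi)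
  have hBm (n : ℕ) : PowerSeries.coeff n Bm ∈ supported ℝ ℝ (Set.Iic 0) :=
    mem_supported'.mpr fun i hi => hBm_pos n i (by simpa using hi)
  have hprod (n : ℕ) : PowerSeries.coeff n (Bp * Bm) ∈ supported ℝ ℝ (Set.Icc (-d : ℤ) d) := by
    refine PowerSeries.coeff_mem_supported_of_coeff_mul_mem (t := ({0} : Set ℤ)) (by simp)
      (Q := PowerSeries.map (algebraMap ℝ E1) B0) (by simp [hB0]) (fun k => ?_)
      (fun k => by rw [mul_comm, ← mul_assoc]; exact hB k) n
    rw [PowerSeries.coeff_map, coe_algebraMap, Function.comp_apply]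
    exact single_mem_supported _ rfl
  refine ⟨fun n => Set.subset_inter (hBp n) ?_, fun n => Set.subset_inter ?_ (hBm n)⟩
  · exact PowerSeries.coeff_mem_supported_of_coeff_mul_mem (s := Set.Iic (d : ℤ))
      (by simpa using Set.Iic_add_Iic_subset (d : ℤ) 0) hBm0 hBm
      (fun n => supported_mono Set.Icc_subset_Iic_self (hprod n)) n
  · exact PowerSeries.coeff_mem_supported_of_coeff_mul_mem (s := Set.Ici (-d : ℤ))
      (by simpa using Set.Ici_add_Ici_subset (-d : ℤ) 0) hBp0 hBp
      (fun n => by rw [mul_comm]; exact supported_mono Set.Icc_subset_Ici_self (hprod n)) n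

noncomputable def laurentX : PowerSeries E1 := PowerSeries.C (single (1 : ℤ) 1)

noncomputable def xCoeff (W : PowerSeries E1) (i : ℤ) : ℝ⟦X⟧ :=
  PowerSeries.mk fun n => (PowerSeries.coeff n W).coeff i

@[simp] theorem coeff_xCoeff (W : PowerSeries E1) (i : ℤ) (n : ℕ) :
    PowerSeries.coeff n (xCoeff W i) = (PowerSeries.coeff n W).coeff i :=
  PowerSeries.coeff_mk _ _

noncomputable def xPoly (W : PowerSeries E1) (M : ℕ) : ℝ⟦X⟧[X] :=
  ∑ r ∈ Finset.range M, Polynomial.monomial r (xCoeff W r)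

theorem coeff_xPoly (W : PowerSeries E1) (M k : ℕ) :
    (xPoly W M).coeff k = if k < M then xCoeff W k else 0 := by
  simp [xPoly, Polynomial.coeff_monomial]

theorem coeff_aeval_laurentX_monomial (k n : ℕ) (a : ℝ⟦X⟧) :
    PowerSeries.coeff n (Polynomial.aeval laurentX (Polynomial.monomial k a)) =
      single (k : ℤ) (PowerSeries.coeff n a) := by
  rw [Polynomial.aeval_monomial, laurentX, ← map_pow, single_pow, one_pow,
    PowerSeries.coeff_mul_C, PowerSeries.algebraMap_apply'', PowerSeries.coeff_map,
    coe_algebraMap]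
  simp

theorem coeff_coeff_aeval_laurentX (p : ℝ⟦X⟧[X]) (n : ℕ) (i : ℤ) :
    (PowerSeries.coeff n (Polynomial.aeval laurentX p)).coeff i =
      if 0 ≤ i then PowerSeries.coeff n (p.coeff i.toNat) else 0 := by
  induction p using Polynomial.induction_on' with
  | add p q hp hq =>
    simp only [map_add, coeff_add, Finsupp.add_apply, hp, hq, Polynomial.coeff_add]
    split_ifs <;> simp
  | monomial k a =>
    rw [coeff_aeval_laurentX_monomial, coeff_single, Finsupp.single_apply,
      Polynomial.coeff_monomial]
    split_ifs <;> first | rfl | omega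

theorem aeval_laurentX_injective :
    Function.Injective (Polynomial.aeval (R := ℝ⟦X⟧) laurentX) := by
  intro p q h
  ext k n
  simpa [coeff_coeff_aeval_laurentX] using
    congrArg (fun W => (PowerSeries.coeff n W).coeff (k : ℤ)) h

theorem aeval_laurentX_xPoly {W : PowerSeries E1} {M : ℕ}
    (hW : ∀ n, PowerSeries.coeff n W ∈ supported ℝ ℝ (Set.Icc 0 (M : ℤ))) :
    Polynomial.aeval laurentX (xPoly W (M + 1)) = W := by
  ext n i
  have hWi := mem_supported'.mp (hW n) i
  rw [coeff_coeff_aeval_laurentX, coeff_xPoly]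
  split_ifs with h0 hM
  · rw [coeff_xCoeff, Int.toNat_of_nonneg h0]
  · exact (hWi (by simp; omega)).symm
  · exact (hWi (by simp; omega)).symm

theorem coeff_laurentX_pow_mul (d n : ℕ) (W : PowerSeries E1) :
    PowerSeries.coeff n (laurentX ^ d * W) = single (d : ℤ) 1 * PowerSeries.coeff n W := by
  rw [laurentX, ← map_pow, single_pow, one_pow, PowerSeries.coeff_C_mul, nsmul_one]

theorem xCoeff_laurentX_pow_mul (d : ℕ) (W : PowerSeries E1) (i : ℤ) :
    xCoeff (laurentX ^ d * W) i = xCoeff W (i - d) := by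
  ext n
  rw [coeff_xCoeff, coeff_xCoeff, coeff_laurentX_pow_mul, coeff_single_mul_apply, one_mul,
    neg_add_eq_sub]

theorem coeff_laurentX_pow_mul_mem_supported {d : ℕ} {a b : ℤ} {W : PowerSeries E1}
    (hW : ∀ n, PowerSeries.coeff n W ∈ supported ℝ ℝ (Set.Icc a b)) (n : ℕ) :
    PowerSeries.coeff n (laurentX ^ d * W) ∈ supported ℝ ℝ (Set.Icc (d + a) (d + b)) := by
  rw [coeff_laurentX_pow_mul]
  exact supported_mono (Set.Icc_add_Icc_subset _ _ _ _)
    (mul_mem_supported_add (single_mem_supported _ ⟨le_rfl, le_rfl⟩) (hW n))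

theorem xCoeff_zero_eq_one {W : PowerSeries E1} (h₀ : PowerSeries.coeff 0 W = 1)
    (h : ∀ n : ℕ, 1 ≤ n → (PowerSeries.coeff n W).coeff 0 = 0) : xCoeff W 0 = 1 := by
  ext n
  rw [coeff_xCoeff, PowerSeries.coeff_one]
  split_ifs with hn
  · rw [hn, h₀, one_def, coeff_single, Finsupp.single_eq_same]
  · exact h n (by omega)

theorem xPoly_mem_lifts {W : PowerSeries E1} {N : ℕ}
    (hW : ∀ n, N ≤ n → PowerSeries.coeff n W = 0) (M : ℕ) :
    xPoly W M ∈ Polynomial.lifts (algebraMap ℝ[X] ℝ⟦X⟧) := by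
  refine (Polynomial.lifts_iff_coeff_lifts _).mpr fun k => ?_
  rw [coeff_xPoly]
  split_ifs
  · refine ⟨PowerSeries.trunc N (xCoeff W k), PowerSeries.ext fun n => ?_⟩
    change PowerSeries.coeff n (PowerSeries.trunc N (xCoeff W k) : ℝ⟦X⟧) = _
    rw [Polynomial.coeff_coe, PowerSeries.coeff_trunc]
    split_ifs with hn
    · rfl
    · rw [coeff_xCoeff, hW n (by omega), coeff_zero, Finsupp.zero_apply]
  · exact ⟨0, map_zero _⟩

/-- `x ^ d * B` is a polynomial in `x` and `t`, and its coefficient of `x ^ d` has constant term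
`1`, so it is a nonzero polynomial over `ℝ[t]`. -/
theorem exists_map_eq_C_mul_mul {B : PowerSeries E1} {B0 : PowerSeries ℝ}
    {Bp Bm : PowerSeries E1} (hfact : B = PowerSeries.map (algebraMap ℝ E1) B0 * Bp * Bm)
    (hB0 : PowerSeries.coeff 0 B = 1) {N : ℕ} (hN : ∀ n, N ≤ n → PowerSeries.coeff n B = 0)
    {d : ℕ} (hB : ∀ n, PowerSeries.coeff n B ∈ supported ℝ ℝ (Set.Icc (-d : ℤ) d))
    {P Q : ℝ⟦X⟧[X]} (hP : Polynomial.aeval laurentX P = Bp)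
    (hQ : Polynomial.aeval laurentX Q = laurentX ^ d * Bm) :
    ∃ H : ℝ[X][X], H ≠ 0 ∧ H.map (algebraMap ℝ[X] ℝ⟦X⟧) = Polynomial.C B0 * P * Q := by
  have hxB (n : ℕ) :
      PowerSeries.coeff n (laurentX ^ d * B) ∈ supported ℝ ℝ (Set.Icc 0 ((d + d : ℕ) : ℤ)) := by
    have h := coeff_laurentX_pow_mul_mem_supported (d := d) hB n
    rwa [add_neg_cancel, ← Nat.cast_add] at h
  set F := xPoly (laurentX ^ d * B) (d + d + 1)
  have hF : F = Polynomial.C B0 * P * Q := by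
    refine aeval_laurentX_injective ?_
    rw [aeval_laurentX_xPoly hxB, map_mul, map_mul, Polynomial.aeval_C,
      PowerSeries.algebraMap_apply'', hP, hQ, hfact]
    ring
  obtain ⟨H, hH⟩ := (Polynomial.mem_lifts F).mp (xPoly_mem_lifts (N := N)
    (fun n hn => by rw [coeff_laurentX_pow_mul, hN n hn, mul_zero]) _)
  refine ⟨H, ?_, hH.trans hF⟩
  rintro rfl
  have hFd : PowerSeries.coeff 0 (F.coeff d) = 0 := by
    rw [← hH, Polynomial.map_zero, Polynomial.coeff_zero, map_zero]
  rw [coeff_xPoly, if_pos (by omega), xCoeff_laurentX_pow_mul, sub_self, coeff_xCoeff, hB0,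
    one_def, coeff_single, Finsupp.single_eq_same] at hFd
  exact one_ne_zero hFd

theorem isAlgebraic_aeval_laurentX [Algebra (MvPolynomial (Fin 2) ℝ) (PowerSeries E1)]
    (hC : ∀ a, algebraMap (MvPolynomial (Fin 2) ℝ) (PowerSeries E1) (MvPolynomial.C a) =
      algebraMap ℝ (PowerSeries E1) a)
    (hX : algebraMap (MvPolynomial (Fin 2) ℝ) (PowerSeries E1) (MvPolynomial.X 1) = PowerSeries.X)
    (hx : IsAlgebraic (MvPolynomial (Fin 2) ℝ) laurentX) {p : ℝ⟦X⟧[X]}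
    (hp : ∀ i, IsAlgebraic ℝ[X] (p.coeff i)) :
    IsAlgebraic (MvPolynomial (Fin 2) ℝ) (Polynomial.aeval laurentX p) := by
  have hcomp : (algebraMap (MvPolynomial (Fin 2) ℝ) (PowerSeries E1)).comp
      (Polynomial.toMvPolynomial (R := ℝ) (1 : Fin 2) : ℝ[X] →+* MvPolynomial (Fin 2) ℝ) =
      (algebraMap ℝ⟦X⟧ (PowerSeries E1)).comp (algebraMap ℝ[X] ℝ⟦X⟧) := by
    refine Polynomial.ringHom_ext (fun a => ?_) ?_
    · simp [hC, PowerSeries.algebraMap_apply'', PowerSeries.algebraMap_apply',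
        PowerSeries.algebraMap_apply]
    · simp [hX, PowerSeries.algebraMap_apply'', PowerSeries.algebraMap_apply']
  exact Polynomial.isAlgebraic_aeval hx fun i => (hp i).ringHom_of_comp_eq _ _
    (Polynomial.toMvPolynomial_injective 1) hcomp

theorem exists_eval₂_evalXT_aeval_laurentX_eq_zero {p : ℝ⟦X⟧[X]}
    (hp : ∀ i, IsAlgebraic ℝ[X] (p.coeff i)) :
    ∃ Pp : Polynomial (MvPolynomial (Fin 2) ℝ), Pp ≠ 0 ∧
      Polynomial.eval₂ evalXT (Polynomial.aeval laurentX p) Pp = 0 := by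
  let := evalXT.toAlgebra
  have hx : IsAlgebraic (MvPolynomial (Fin 2) ℝ) laurentX := by
    simpa [RingHom.algebraMap_toAlgebra, evalXT, laurentX] using
      isAlgebraic_algebraMap (A := PowerSeries E1) (MvPolynomial.X (R := ℝ) (0 : Fin 2))
  exact isAlgebraic_aeval_laurentX (by simp [RingHom.algebraMap_toAlgebra, evalXT])
    (by simp [RingHom.algebraMap_toAlgebra, evalXT]) hx hp

/-- With `u = x⁻¹`, `x` is algebraic over `ℝ[u, t]` as a root of `u Y - 1`, and
`Bm = u ^ d * (x ^ d * Bm)`. -/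
theorem exists_eval₂_evalUT_eq_zero {Bm : PowerSeries E1} {d : ℕ} {p : ℝ⟦X⟧[X]}
    (hp : ∀ i, IsAlgebraic ℝ[X] (p.coeff i))
    (hpBm : Polynomial.aeval laurentX p = laurentX ^ d * Bm) :
    ∃ Pm : Polynomial (MvPolynomial (Fin 2) ℝ), Pm ≠ 0 ∧ Polynomial.eval₂ evalUT Bm Pm = 0 := by
  let := evalUT.toAlgebra
  set u := algebraMap (MvPolynomial (Fin 2) ℝ) (PowerSeries E1) (MvPolynomial.X 0)
  have hux : u * laurentX = 1 := by
    rw [show u = evalUT (MvPolynomial.X 0) from rfl, evalUT, MvPolynomial.coe_eval₂Hom,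
      MvPolynomial.eval₂_X, if_pos rfl, laurentX, ← map_mul, single_mul_single, neg_add_cancel,
      one_mul, ← one_def, map_one]
  have hx : IsAlgebraic (MvPolynomial (Fin 2) ℝ) laurentX :=
    IsAlgebraic.of_mul (mem_nonZeroDivisors_of_ne_zero (left_ne_zero_of_mul_eq_one hux))
      (isAlgebraic_algebraMap _) (hux ▸ isAlgebraic_one)
  have hBm : Bm = u ^ d * Polynomial.aeval laurentX p := by
    rw [hpBm, ← mul_assoc, ← mul_pow, hux, one_pow, one_mul]
  rw [hBm]
  exact ((isAlgebraic_algebraMap _).pow d).mul <| isAlgebraic_aeval_laurentX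
    (by simp [RingHom.algebraMap_toAlgebra, evalUT])
    (by simp [RingHom.algebraMap_toAlgebra, evalUT]) hx hp

/-- if `B ∈ ℝ[x,x⁻¹][[t]]` with `B(x;0) = 1` is a Laurent polynomial
(i.e. polynomial in `t`), then in its canonical factorization `(B₀, B₊, B₋)`, the
factor `B₊` is a polynomial in `x` (bounded degree), `B₋` is a polynomial in `x⁻¹`,
and all three factors are algebraic: `B₀` over `ℝ(t)`, `B₊` over `ℝ(x,t)` and `B₋`
over `ℝ(u,t)` with `u = x⁻¹`. -/
theorem statement10 (B : PowerSeries E1)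
    (hB0 : PowerSeries.coeff 0 B = 1)
    (hpolyT : ∃ N : ℕ, ∀ n : ℕ, N ≤ n → PowerSeries.coeff n B = 0)
    (hpolyX : ∃ d : ℕ, ∀ (n : ℕ) (i : ℤ), (d : ℤ) < |i| → (PowerSeries.coeff n B).coeff i = 0)
    (B0 : PowerSeries ℝ) (Bp Bm : PowerSeries E1)
    (hfact : IsCanonicalFactorization B B0 Bp Bm) :
    (∃ d : ℕ, ∀ (n : ℕ) (i : ℤ), (d : ℤ) < i → (PowerSeries.coeff n Bp).coeff i = 0) ∧
    (∃ d : ℕ, ∀ (n : ℕ) (i : ℤ), i < -(d : ℤ) → (PowerSeries.coeff n Bm).coeff i = 0) ∧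
    (∃ P0 : Polynomial (Polynomial ℝ), P0 ≠ 0 ∧
      Polynomial.eval₂ Polynomial.coeToPowerSeries.ringHom B0 P0 = 0) ∧
    (∃ Pp : Polynomial (MvPolynomial (Fin 2) ℝ), Pp ≠ 0 ∧
      Polynomial.eval₂ evalXT Bp Pp = 0) ∧
    (∃ Pm : Polynomial (MvPolynomial (Fin 2) ℝ), Pm ≠ 0 ∧
      Polynomial.eval₂ evalUT Bm Pm = 0) := by
  obtain ⟨N, hN⟩ := hpolyT
  obtain ⟨d, hd⟩ := hpolyX
  have hB (n : ℕ) : PowerSeries.coeff n B ∈ supported ℝ ℝ (Set.Icc (-d : ℤ) d) :=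
    mem_supported'.mpr fun i hi => hd n i (lt_of_not_ge fun h => hi (abs_le.mp h))
  obtain ⟨hBp, hBm⟩ := hfact.coeff_mem_supported hB
  obtain ⟨heq, -, -, -, hBp0, hBm0, hBpn, hBmn⟩ := hfact
  have hP : Polynomial.aeval laurentX (xPoly Bp (d + 1)) = Bp := aeval_laurentX_xPoly hBp
  have hQ : Polynomial.aeval laurentX (xPoly (laurentX ^ d * Bm) (d + 1)) = laurentX ^ d * Bm :=
    aeval_laurentX_xPoly fun n => by
      simpa using coeff_laurentX_pow_mul_mem_supported (d := d) hBm n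
  obtain ⟨H, hH0, hH⟩ := exists_map_eq_C_mul_mul heq hB0 hN hB hP hQ
  obtain ⟨⟨P0, hP0, hB0alg⟩, hPalg, hQalg⟩ :=
    Polynomial.isAlgebraic_of_map_eq_C_mul_mul hH0 hH (i := 0) (j := d)
      (by rw [coeff_xPoly, if_pos (by omega)]; exact xCoeff_zero_eq_one hBp0 hBpn)
      (by rw [coeff_xPoly, if_pos (by omega), xCoeff_laurentX_pow_mul, sub_self]
          exact xCoeff_zero_eq_one hBm0 hBmn)
  refine ⟨⟨d, fun n i hi => mem_supported'.mp (hBp n) i fun h => hi.not_ge h.2⟩,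
    ⟨d, fun n i hi => mem_supported'.mp (hBm n) i fun h => hi.not_ge h.1⟩, ⟨P0, hP0, hB0alg⟩,
    hP ▸ exists_eval₂_evalXT_aeval_laurentX_eq_zero hPalg, exists_eval₂_evalUT_eq_zero hQalg hQ⟩

end SlitPlane
end

section
/- Let S be a finite subset of Z^2 with small height variations (|j| <= 1 for all (i,j) in S), and set A_j(x) = sum_{(i,j) in S} x^i for j = -1,0,1. Let Z(x;t) be the unique element of Q[x,x^{-1}][[t]] that is a multiple of t and satisfies t Z^2 - (1 - t A_0(x)) Z + t A_1(x) A_{-1}(x) = 0. For j in Z, let S_j(x;t) in Q[x,x^{-1}][[t]] be the generating function for walks on the slit plane ending at ordinate j, and S_0(x;t) that for walks ending on the x-axis. Then for every j >= 0: A_{-1}(x)^j * S_j(x;t) = S_0(x;t) * Z(x;t)^j, and A_1(x)^j * S_{-j}(x;t) = S_0(x;t) * Z(x;t)^j. -/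
/-!
Cutting a walk on the slit plane that ends at height `j > 0` at its last visit to the x-axis,
and then at its last visits to the heights `1, …, j - 1`, writes it uniquely as a walk on the
slit plane ending on the axis followed by `j` walks ending one unit higher whose vertices after
the first stay strictly above their starting height. Hence `S_j = S_0 U^j`, where `U` counts
walks with all vertices `w_1, …, w_n` in the upper half-plane and ending at height `1`.
Classifying those walks by their last step gives `U = tA₁ + tA₀U + tA₋₁U²`, so `A₋₁U` solves
the quadratic, whose solution is unique. Negative ordinates are positive ordinates for the step
set reflected in the x-axis.
-/

open scoped Classical
open PowerSeries

namespace SlitPlane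

/-- A point (or step) of the lattice `ℤ²`. -/
abbrev Pt := ℤ × ℤ

/-- All steps of the walk `l` belong to `S`.  A walk is identified with its
list of steps; it starts at the origin. -/
def StepsIn (S : Finset Pt) (l : List Pt) : Prop := ∀ s ∈ l, s ∈ S

/-- The vertex `w_i` of the walk reached after `i` steps. -/
def vert (l : List Pt) (i : ℕ) : Pt := (l.take i).sum

/-- Membership in the half-line `H = {(k,0) : k ≤ 0}`. -/
def OnH (p : Pt) : Prop := p.2 = 0 ∧ p.1 ≤ 0

/-- Membership in the half-line `{(k,0) : k < 0}`. -/
def OnNegAxis (p : Pt) : Prop := p.2 = 0 ∧ p.1 < 0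

/-- A walk on the slit plane: none of the vertices `w_1, ..., w_n` lies on `H`. -/
def AvoidsH (l : List Pt) : Prop := ∀ i, 1 ≤ i → i ≤ l.length → ¬ OnH (vert l i)

/-- Number of walks of length `n` on the slit plane, with steps in `S`, ending at `e`. -/
noncomputable def slitCount (S : Finset Pt) (n : ℕ) (e : Pt) : ℕ :=
  Set.ncard {l : List Pt | l.length = n ∧ StepsIn S l ∧ AvoidsH l ∧ l.sum = e}

/-- Number of (unconstrained) walks of length `n` with steps in `S` ending at `e`. -/
noncomputable def walkCount (S : Finset Pt) (n : ℕ) (e : Pt) : ℕ :=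
  Set.ncard {l : List Pt | l.length = n ∧ StepsIn S l ∧ l.sum = e}

/-- Number of loops of length `n` with steps in `S`: walks ending at the origin,
none of whose vertices lies on `{(k,0) : k < 0}`. -/
noncomputable def loopCount (S : Finset Pt) (n : ℕ) : ℕ :=
  Set.ncard {l : List Pt | l.length = n ∧ StepsIn S l ∧
    (∀ i ≤ l.length, ¬ OnNegAxis (vert l i)) ∧ l.sum = (0, 0)}

end SlitPlane

namespace SlitPlane

/-- The Laurent polynomial ring `ℚ[x, x⁻¹]`. -/
abbrev L1 := AddMonoidAlgebra ℚ ℤ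

/-- The Laurent polynomial `A_j(x) = ∑_{(i,j) ∈ S} x^i`. -/
noncomputable def Apoly (S : Finset Pt) (j : ℤ) : L1 :=
  ∑ s ∈ S.filter (fun s => s.2 = j), AddMonoidAlgebra.single s.1 (1 : ℚ)

end SlitPlane

theorem exists_last_eq_of_lt {f : ℕ → ℤ} {h : ℤ} {n : ℕ} (hstep : ∀ i < n, f (i + 1) ≤ f i + 1)
    (h0 : f 0 ≤ h) (hn : h < f n) : ∃ k < n, f k = h ∧ ∀ m, k < m → m ≤ n → h < f m := by
  induction n with
  | zero => omega
  | succ n ih =>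
    by_cases hfn : h < f n
    · obtain ⟨k, hk, hfk, habove⟩ := ih (fun i hi => hstep i (by omega)) hfn
      refine ⟨k, by omega, hfk, fun m hkm hm => ?_⟩
      rcases Nat.lt_or_ge m (n + 1) with hm' | hm'
      · exact habove m hkm (by omega)
      · rwa [show m = n + 1 by omega]
    · have := hstep n n.lt_succ_self
      exact ⟨n, n.lt_succ_self, by omega, fun m hnm hm => by rwa [show m = n + 1 by omega]⟩

namespace PowerSeries

theorem eq_zero_of_eq_X_mul_mul {R : Type*} [CommSemiring R] {f g : PowerSeries R}
    (h : f = X * (g * f)) : f = 0 := by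
  have hdvd : ∀ n, X ^ n ∣ f := by
    intro n
    induction n with
    | zero => exact one_dvd f
    | succ n ih =>
      rw [h, pow_succ']
      exact mul_dvd_mul_left X (ih.mul_left g)
  ext n
  exact X_pow_dvd_iff.1 (hdvd (n + 1)) n n.lt_succ_self

theorem eq_of_quadratic {R : Type*} [CommRing R] {a b : R} {Z W : PowerSeries R}
    (hZ : X * Z ^ 2 - (1 - X * C a) * Z + X * C b = 0)
    (hW : X * W ^ 2 - (1 - X * C a) * W + X * C b = 0) : Z = W :=
  sub_eq_zero.1 <| eq_zero_of_eq_X_mul_mul (g := Z + W + C a) <| by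
    linear_combination hW - hZ

end PowerSeries

namespace SlitPlane

def walks (S : Finset Pt) : ℕ → Finset (List Pt)
  | 0 => {[]}
  | n + 1 => (S ×ˢ walks S n).image fun p => p.1 :: p.2

theorem mem_walks {S : Finset Pt} {n : ℕ} {l : List Pt} :
    l ∈ walks S n ↔ l.length = n ∧ StepsIn S l := by
  induction n generalizing l with
  | zero =>
    simp only [walks, Finset.mem_singleton, List.length_eq_zero_iff]
    exact ⟨fun h => ⟨h, h ▸ fun _ => by simp⟩, And.left⟩
  | succ n ih =>
    cases l with
    | nil => simp [walks]
    | cons s l =>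
      simp only [walks, Finset.mem_image, Finset.mem_product, ih, StepsIn, Prod.exists,
        List.cons.injEq, List.length_cons, List.mem_cons, forall_eq_or_imp]
      grind

/-- `t` marks the length of a walk and `x` the abscissa of its endpoint; ordinates are
constrained through `P` instead of being recorded. -/
noncomputable def gf (S : Finset Pt) (P : List Pt → Prop) : PowerSeries L1 :=
  PowerSeries.mk fun n => ∑ l ∈ (walks S n).filter P, AddMonoidAlgebra.single l.sum.1 1

theorem coeff_gf (S : Finset Pt) (P : List Pt → Prop) (n : ℕ) :
    coeff n (gf S P) = ∑ l ∈ (walks S n).filter P, AddMonoidAlgebra.single l.sum.1 1 :=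
  coeff_mk _ _

theorem coeff_coeff_gf (S : Finset Pt) (P : List Pt → Prop) (n : ℕ) (i : ℤ) :
    (coeff n (gf S P)).coeff i = ((walks S n).filter fun l => P l ∧ l.sum.1 = i).card := by
  simp only [coeff_gf, AddMonoidAlgebra.coeff_sum, AddMonoidAlgebra.coeff_single,
    Finsupp.finsetSum_apply, Finsupp.single_apply, Finset.sum_boole, Finset.filter_filter]

theorem gf_mul {S : Finset Pt} {P A B : List Pt → Prop}
    (split : ∀ l, StepsIn S l → P l → ∃ k ≤ l.length, A (l.take k) ∧ B (l.drop k))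
    (join : ∀ p q, A p → B q → P (p ++ q))
    (unique : ∀ (l : List Pt) (k k' : ℕ), k ≤ l.length → k' ≤ l.length →
      A (l.take k) → B (l.drop k) → A (l.take k') → B (l.drop k') → k = k') :
    gf S P = gf S A * gf S B := by
  ext n : 1
  simp only [coeff_mul, coeff_gf, Finset.sum_mul_sum, ← Finset.sum_product',
    AddMonoidAlgebra.single_mul_single, one_mul, Finset.sum_sigma']
  symm
  refine Finset.sum_nbij (fun x => x.2.1 ++ x.2.2) ?_ ?_ ?_ ?_
  · rintro ⟨⟨a, b⟩, p, q⟩ hx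
    simp only [Finset.mem_sigma, Finset.HasAntidiagonal.mem_antidiagonal, Finset.mem_product,
      Finset.mem_filter, mem_walks] at hx ⊢
    obtain ⟨rfl, ⟨⟨rfl, hpS⟩, hp⟩, ⟨rfl, hqS⟩, hq⟩ := hx
    refine ⟨⟨by simp, fun s hs => ?_⟩, join p q hp hq⟩
    rcases List.mem_append.1 hs with hs | hs
    exacts [hpS s hs, hqS s hs]
  · rintro ⟨⟨a, b⟩, p, q⟩ hx ⟨⟨a', b'⟩, p', q'⟩ hx' (h : p ++ q = p' ++ q')
    simp only [Finset.coe_sigma, Set.mem_sigma_iff, Finset.coe_product, Set.mem_prod,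
      Finset.mem_coe, Finset.mem_filter, mem_walks] at hx hx'
    obtain ⟨-, ⟨⟨rfl, -⟩, hp⟩, ⟨rfl, -⟩, hq⟩ := hx
    obtain ⟨-, ⟨⟨rfl, -⟩, hp'⟩, ⟨rfl, -⟩, hq'⟩ := hx'
    have hlen : p.length = p'.length :=
      unique (p ++ q) _ _ (by simp) (by simp [h]) (by simpa) (by simpa) (by simpa [h])
        (by simpa [h])
    obtain ⟨rfl, rfl⟩ := List.append_inj h hlen
    rfl
  · rintro l hl
    simp only [Finset.coe_filter, Set.mem_ofPred_eq, mem_walks] at hl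
    obtain ⟨⟨rfl, hS⟩, hP⟩ := hl
    obtain ⟨k, hk, hA, hB⟩ := split l hS hP
    refine ⟨⟨(k, l.length - k), l.take k, l.drop k⟩, ?_, List.take_append_drop k l⟩
    simp only [Finset.coe_sigma, Set.mem_sigma_iff, Finset.coe_product, Set.mem_prod,
      Finset.mem_coe, Finset.mem_filter, mem_walks, Finset.HasAntidiagonal.mem_antidiagonal]
    exact ⟨by omega, ⟨⟨by simp [hk], fun s hs => hS s (List.mem_of_mem_take hs)⟩, hA⟩,
      ⟨by simp, fun s hs => hS s (List.mem_of_mem_drop hs)⟩, hB⟩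
  · rintro ⟨⟨a, b⟩, p, q⟩ -
    simp

theorem coeff_gf_eq_zero {S : Finset Pt} {P : List Pt → Prop} {n : ℕ}
    (h : ∀ l : List Pt, l.length = n → ¬ P l) : coeff n (gf S P) = 0 := by
  rw [coeff_gf, Finset.filter_false_of_mem fun l hl => h l (mem_walks.1 hl).1, Finset.sum_empty]

theorem gf_eq_one {S : Finset Pt} {P : List Pt → Prop} (hnil : P []) (h : ∀ l, l ≠ [] → ¬ P l) :
    gf S P = 1 := by
  ext (_ | n) : 1
  · rw [coeff_gf, coeff_zero_one, walks, Finset.filter_singleton, if_pos hnil,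
      Finset.sum_singleton]
    rfl
  · rw [coeff_gf_eq_zero fun l hl => h l (List.ne_nil_of_length_eq_add_one hl), coeff_one,
      if_neg n.succ_ne_zero]

theorem gf_single_step (S : Finset Pt) (δ : ℤ) :
    gf S (fun l => l.length = 1 ∧ l.sum.2 = δ) = X * C (Apoly S δ) := by
  ext (_ | _ | n) : 1
  · rw [coeff_zero_X_mul, coeff_gf_eq_zero fun l hl h => by omega]
  · simp [coeff_gf, walks, Apoly, Finset.map_eq_image, Finset.image_image, Finset.filter_image,
      Finset.sum_image, -LaurentPolynomial.single_eq_C_mul_T]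
  · rw [coeff_succ_X_mul, coeff_C, if_neg n.succ_ne_zero,
      coeff_gf_eq_zero fun l hl h => by omega]

theorem gf_eq_sum_fiberwise {S : Finset Pt} {P : List Pt → Prop} {g : List Pt → ℤ} {D : Finset ℤ}
    (h : ∀ l, StepsIn S l → P l → g l ∈ D) :
    gf S P = ∑ δ ∈ D, gf S fun l => P l ∧ g l = δ := by
  ext n : 1
  rw [map_sum, coeff_gf, ← Finset.sum_fiberwise_of_maps_to (g := g) (t := D) fun l hl =>
    h l (mem_walks.1 (Finset.mem_filter.1 hl).1).2 (Finset.mem_filter.1 hl).2]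
  refine Finset.sum_congr rfl fun δ _ => ?_
  rw [coeff_gf, Finset.filter_filter]
  convert rfl

theorem vert_add (l : List Pt) (k i : ℕ) : vert l (k + i) = vert l k + vert (l.drop k) i := by
  rw [vert, List.take_add, List.sum_append]; rfl

theorem vert_length (l : List Pt) : vert l l.length = l.sum := by
  rw [vert, List.take_length]

theorem vert_append_of_le {p : List Pt} (q : List Pt) {i : ℕ} (h : i ≤ p.length) :
    vert (p ++ q) i = vert p i := by
  rw [vert, List.take_append_of_le_length h]; rfl

theorem vert_append_add (p q : List Pt) (i : ℕ) :
    vert (p ++ q) (p.length + i) = p.sum + vert q i := by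
  rw [vert_add, vert_append_of_le q le_rfl, vert_length, List.drop_left]

theorem snd_vert_add_one_le {S : Finset Pt} (hS : ∀ s ∈ S, s.2 ≤ 1) {l : List Pt}
    (hl : StepsIn S l) {i : ℕ} (hi : i < l.length) : (vert l (i + 1)).2 ≤ (vert l i).2 + 1 := by
  rw [vert, List.take_add_one, List.getElem?_eq_getElem hi, List.sum_append]
  simpa [vert] using hS _ (hl _ (List.getElem_mem hi))

def VertsIn (R : Set Pt) (l : List Pt) : Prop := ∀ i, 1 ≤ i → i ≤ l.length → vert l i ∈ R

theorem VertsIn.mono {R R' : Set Pt} (h : R ⊆ R') {l : List Pt} (hl : VertsIn R l) :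
    VertsIn R' l :=
  fun i hi1 hi2 => h (hl i hi1 hi2)

theorem vertsIn_append {R : Set Pt} {p q : List Pt} :
    VertsIn R (p ++ q) ↔ VertsIn R p ∧ VertsIn ((p.sum + ·) ⁻¹' R) q := by
  constructor
  · intro h
    refine ⟨fun i hi1 hi2 => ?_, fun i hi1 hi2 => ?_⟩
    · simpa [vert_append_of_le q hi2] using h i hi1 (by simp; omega)
    · simpa [vert_append_add] using h (p.length + i) (by omega) (by simp; omega)
  · rintro ⟨hp, hq⟩ i hi1 hi2
    rcases le_or_gt i p.length with hi | hi
    · rw [vert_append_of_le q hi]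
      exact hp i hi1 hi
    · obtain ⟨m, rfl⟩ := Nat.exists_eq_add_of_lt hi
      rw [add_assoc, vert_append_add]
      exact hq _ (by omega) (by simp at hi2; omega)

noncomputable def confinedGF (S : Finset Pt) (R : Set Pt) (j : ℤ) : PowerSeries L1 :=
  gf S fun l => VertsIn R l ∧ l.sum.2 = j

def upperHalfPlane : Set Pt := {p | 0 < p.2}

/-- Cutting a walk at its last visit to height `h`. -/
theorem confinedGF_eq_mul {S : Finset Pt} (hS : ∀ s ∈ S, s.2 ≤ 1) {R : Set Pt} {h j : ℤ}
    (hR : ∀ p : Pt, h < p.2 → p ∈ R) (h0 : 0 ≤ h) (hj : h < j) :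
    confinedGF S R j = confinedGF S R h * confinedGF S upperHalfPlane (j - h) := by
  apply gf_mul
  · rintro l hl ⟨hlR, hlj⟩
    obtain ⟨k, hk, hkh, habove⟩ := exists_last_eq_of_lt (f := fun m => (vert l m).2)
      (fun i hi => snd_vert_add_one_le hS hl hi) (by simpa [vert] using h0)
      (by rwa [vert_length, hlj])
    rw [← List.take_append_drop k l, vertsIn_append] at hlR
    refine ⟨k, hk.le, ⟨hlR.1, hkh⟩, fun i hi1 hi2 => ?_, ?_⟩
    · have := habove (k + i) (by omega) (by simp at hi2; omega)
      simp only [vert_add, Prod.snd_add] at this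
      change 0 < (vert (l.drop k) i).2
      omega
    · have := congrArg Prod.snd (List.sum_take_add_sum_drop l k)
      simp only [Prod.snd_add] at this
      change (vert l k).2 + _ = _ at this
      omega
  · rintro p q ⟨hp, hph⟩ ⟨hq, hqj⟩
    refine ⟨vertsIn_append.2 ⟨hp, hq.mono fun x (hx : 0 < x.2) => hR (p.sum + x) ?_⟩, ?_⟩
    · simp only [Prod.snd_add, hph]
      omega
    · simp [hph, hqj]
  · have no_later_visit : ∀ l (a b : ℕ), b ≤ l.length → (vert l a).2 = h →
        VertsIn upperHalfPlane (l.drop a) → (vert l b).2 = h → b ≤ a := by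
      intro l a b hb ha hup hbh
      by_contra hab
      have := hup (b - a) (by omega) (by simp; omega)
      rw [← Nat.add_sub_of_le (le_of_not_ge hab), vert_add] at hbh
      simp only [upperHalfPlane, Set.mem_ofPred_eq, Prod.snd_add] at this hbh
      omega
    intro l k k' hk hk' hA hB hA' hB'
    exact le_antisymm (no_later_visit l k' k hk hA'.2 hB'.1 hA.2)
      (no_later_visit l k k' hk' hA.2 hB.1 hA'.2)

theorem confinedGF_upperHalfPlane_zero (S : Finset Pt) : confinedGF S upperHalfPlane 0 = 1 := by
  refine gf_eq_one ⟨fun i hi1 hi2 => by simp at hi2; omega, rfl⟩ fun l hl ⟨hup, hl0⟩ => ?_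
  have := hup l.length (List.length_pos_iff.2 hl) le_rfl
  simp only [upperHalfPlane, Set.mem_ofPred_eq, vert_length, hl0] at this
  omega

theorem confinedGF_upperHalfPlane_add_one {S : Finset Pt} (hS : ∀ s ∈ S, s.2 ≤ 1) {j : ℤ}
    (hj : 0 < j) : confinedGF S upperHalfPlane (j + 1) =
      confinedGF S upperHalfPlane 1 * confinedGF S upperHalfPlane j := by
  simpa using confinedGF_eq_mul hS (R := upperHalfPlane) (h := 1) (j := j + 1)
    (fun p (hp : 1 < p.2) => show 0 < p.2 by omega) zero_le_one (by omega)

theorem confinedGF_upperHalfPlane_eq_pow {S : Finset Pt} (hS : ∀ s ∈ S, s.2 ≤ 1) (j : ℕ) :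
    confinedGF S upperHalfPlane j = confinedGF S upperHalfPlane 1 ^ j := by
  induction j with
  | zero => simpa using confinedGF_upperHalfPlane_zero S
  | succ j ih =>
    rcases j.eq_zero_or_pos with rfl | hj
    · simp
    · rw [pow_succ', ← ih, Nat.cast_succ, confinedGF_upperHalfPlane_add_one hS (by omega)]

theorem gf_split_last_step {S : Finset Pt} {R : Set Pt} {j : ℤ} (hj : j ≠ 0)
    (hR : ∀ p : Pt, p.2 = j → p ∈ R) (δ : ℤ) :
    gf S (fun l => (VertsIn R l ∧ l.sum.2 = j) ∧ (l.getLastD 0).2 = δ) =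
      confinedGF S R (j - δ) * (X * C (Apoly S δ)) := by
  rw [← gf_single_step]
  apply gf_mul
  · rintro l - ⟨⟨hlR, hlj⟩, hδ⟩
    obtain ⟨p, s, rfl⟩ : ∃ p s, l = p ++ [s] := by
      rcases List.eq_nil_or_concat' l with rfl | h
      · exact absurd hlj.symm hj
      · exact h
    rw [List.getLastD_concat] at hδ
    rw [vertsIn_append] at hlR
    refine ⟨p.length, by simp, ?_, ?_⟩
    · simp only [List.sum_append, List.sum_singleton, Prod.snd_add, hδ] at hlj
      simpa using ⟨hlR.1, by omega⟩
    · simpa using hδ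
  · rintro p q ⟨hp, hpj⟩ ⟨hq, hqδ⟩
    obtain ⟨s, rfl⟩ := List.length_eq_one_iff.1 hq
    simp only [List.sum_singleton] at hqδ
    refine ⟨⟨vertsIn_append.2 ⟨hp, fun i hi1 hi2 => hR _ ?_⟩, ?_⟩, by simpa using hqδ⟩
    · simp at hi2
      simp [show i = 1 by omega, vert, hpj, hqδ]
    · simp [hpj, hqδ]
  · intro l k k' hk hk' _ hB _ hB'
    simp only [List.length_drop] at hB hB'
    omega

/-- A walk counted on the left ends with a step of height `δ ∈ {1, 0, -1}` from height `1 - δ`;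
one ending at height `2` factors through height `1`. -/
theorem confinedGF_upperHalfPlane_one {S : Finset Pt} (hS : ∀ s ∈ S, |s.2| ≤ 1) :
    confinedGF S upperHalfPlane 1 = X * C (Apoly S 1)
      + confinedGF S upperHalfPlane 1 * (X * C (Apoly S 0))
      + confinedGF S upperHalfPlane 1 ^ 2 * (X * C (Apoly S (-1))) := by
  have hR : ∀ p : Pt, p.2 = 1 → p ∈ upperHalfPlane := fun p hp => by simp [upperHalfPlane, hp]
  have hU2 : confinedGF S upperHalfPlane 2 = confinedGF S upperHalfPlane 1 ^ 2 := by
    simpa [sq] using confinedGF_upperHalfPlane_add_one (fun s hs => (abs_le.1 (hS s hs)).2) one_pos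
  calc confinedGF S upperHalfPlane 1
      = ∑ δ ∈ {1, 0, -1}, confinedGF S upperHalfPlane (1 - δ) * (X * C (Apoly S δ)) := by
        rw [confinedGF, gf_eq_sum_fiberwise (g := fun l => (l.getLastD 0).2) (D := {1, 0, -1})]
        · simp only [gf_split_last_step one_ne_zero hR]
        rintro l hl ⟨-, hl1⟩
        obtain ⟨p, s, rfl⟩ : ∃ p s, l = p ++ [s] := by
          rcases List.eq_nil_or_concat' l with rfl | h
          · simp at hl1
          · exact h
        have := abs_le.1 (hS s (hl s (by simp)))
        simp only [List.getLastD_concat, Finset.mem_insert, Finset.mem_singleton]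
        omega
    _ = _ := by
        rw [Finset.sum_insert (by norm_num), Finset.sum_pair (by norm_num)]
        norm_num [confinedGF_upperHalfPlane_zero, hU2]
        ring

def slitPlane : Set Pt := {p | ¬ OnH p}

theorem confinedGF_slitPlane_eq_mul {S : Finset Pt} (hS : ∀ s ∈ S, s.2 ≤ 1) (j : ℕ) :
    confinedGF S slitPlane j = confinedGF S slitPlane 0 * confinedGF S upperHalfPlane j := by
  rcases j.eq_zero_or_pos with rfl | hj
  · rw [Nat.cast_zero, confinedGF_upperHalfPlane_zero, mul_one]
  · simpa using confinedGF_eq_mul (R := slitPlane) hS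
      (fun p (hp : 0 < p.2) (hH : OnH p) => hp.ne' hH.1) le_rfl (Nat.cast_pos.2 hj)

theorem eq_confinedGF_of_coeff {S : Finset Pt} {Sfam : ℤ → PowerSeries L1}
    (hSfam : ∀ (j : ℤ) (n : ℕ) (i : ℤ),
      (PowerSeries.coeff n (Sfam j)).coeff i = (slitCount S n (i, j) : ℚ)) (j : ℤ) :
    Sfam j = confinedGF S slitPlane j := by
  ext n : 1
  apply AddMonoidAlgebra.ext
  ext i
  rw [hSfam, confinedGF, coeff_coeff_gf, slitCount, ← Set.ncard_coe_finset]
  congr 2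
  ext l
  simp only [Finset.coe_filter, Set.mem_ofPred_eq, mem_walks, Prod.ext_iff]
  tauto

theorem C_pow_mul_eq_mul_pow {S : Finset Pt} (hS : ∀ s ∈ S, |s.2| ≤ 1) {Z : PowerSeries L1}
    (hZeq : X * Z ^ 2 - (1 - X * C (Apoly S 0)) * Z + X * C (Apoly S 1 * Apoly S (-1)) = 0)
    {Sfam : ℤ → PowerSeries L1}
    (hSfam : ∀ (j : ℤ) (n : ℕ) (i : ℤ),
      (PowerSeries.coeff n (Sfam j)).coeff i = (slitCount S n (i, j) : ℚ)) (j : ℕ) :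
    C (Apoly S (-1)) ^ j * Sfam j = Sfam 0 * Z ^ j := by
  have hS' : ∀ s ∈ S, s.2 ≤ 1 := fun s hs => (abs_le.1 (hS s hs)).2
  have hZ : Z = C (Apoly S (-1)) * confinedGF S upperHalfPlane 1 := eq_of_quadratic hZeq <| by
    rw [map_mul]
    linear_combination (-C (Apoly S (-1))) * confinedGF_upperHalfPlane_one hS
  rw [eq_confinedGF_of_coeff hSfam, eq_confinedGF_of_coeff hSfam, confinedGF_slitPlane_eq_mul hS',
    confinedGF_upperHalfPlane_eq_pow hS', hZ]
  ring

def reflect : Pt →+ Pt := (AddMonoidHom.id ℤ).prodMap (-AddMonoidHom.id ℤ)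

@[simp] theorem reflect_apply (p : Pt) : reflect p = (p.1, -p.2) := rfl

theorem reflect_involutive : Function.Involutive reflect := fun p => by simp

theorem mem_image_reflect {S : Finset Pt} {p : Pt} : p ∈ S.image reflect ↔ reflect p ∈ S := by
  rw [Finset.mem_image]
  exact ⟨by rintro ⟨q, hq, rfl⟩; rwa [reflect_involutive], fun h => ⟨_, h, reflect_involutive p⟩⟩

theorem apoly_image_reflect (S : Finset Pt) (j : ℤ) : Apoly (S.image reflect) j = Apoly S (-j) := by
  rw [Apoly, Finset.filter_image, Finset.sum_image reflect_involutive.injective.injOn, Apoly]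
  refine Finset.sum_congr (Finset.filter_congr fun s _ => ?_) fun s _ => rfl
  simp [neg_eq_iff_eq_neg]

theorem vert_map_reflect (l : List Pt) (i : ℕ) : vert (l.map reflect) i = reflect (vert l i) := by
  rw [vert, vert, ← List.map_take, ← map_list_sum]

theorem slitCount_image_reflect (S : Finset Pt) (n : ℕ) (i j : ℤ) :
    slitCount (S.image reflect) n (i, j) = slitCount S n (i, -j) := by
  have hinv : Function.Involutive (List.map reflect) := fun l => by
    simp [List.map_map, Function.comp_def]
  rw [slitCount, slitCount, ← Set.ncard_image_of_injective _ hinv.injective,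
    Set.image_eq_preimage_of_inverse hinv.leftInverse hinv.rightInverse]
  congr 1
  ext l
  simp only [Set.mem_preimage, Set.mem_ofPred_eq, List.length_map, StepsIn, AvoidsH, OnH,
    List.forall_mem_map, mem_image_reflect, vert_map_reflect, ← map_list_sum, reflect_apply,
    Prod.ext_iff, neg_neg, Prod.mk.eta, neg_eq_iff_eq_neg, neg_zero]

theorem statement13_general (S : Finset Pt)
    (hS : ∀ s ∈ S, |s.2| ≤ 1)
    (Z : PowerSeries L1)
    (hZeq : PowerSeries.X * Z ^ 2
        - (1 - PowerSeries.X * PowerSeries.C (Apoly S 0)) * Z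
        + PowerSeries.X * PowerSeries.C (Apoly S 1 * Apoly S (-1)) = 0)
    (Sfam : ℤ → PowerSeries L1)
    (hSfam : ∀ (j : ℤ) (n : ℕ) (i : ℤ),
      (PowerSeries.coeff n (Sfam j)).coeff i = (slitCount S n (i, j) : ℚ)) :
    ∀ j : ℕ,
      PowerSeries.C (Apoly S (-1)) ^ j * Sfam j = Sfam 0 * Z ^ j ∧
      PowerSeries.C (Apoly S 1) ^ j * Sfam (-(j : ℤ)) = Sfam 0 * Z ^ j := by
  intro j
  refine ⟨C_pow_mul_eq_mul_pow hS hZeq hSfam j, ?_⟩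
  have hS_refl : ∀ s ∈ S.image reflect, |s.2| ≤ 1 := fun s hs => by
    simpa using hS _ (mem_image_reflect.1 hs)
  have hZeq_refl : X * Z ^ 2 - (1 - X * C (Apoly (S.image reflect) 0)) * Z
      + X * C (Apoly (S.image reflect) 1 * Apoly (S.image reflect) (-1)) = 0 := by
    rwa [apoly_image_reflect, apoly_image_reflect, apoly_image_reflect, neg_zero, neg_neg,
      mul_comm (Apoly S (-1))]
  have h := C_pow_mul_eq_mul_pow hS_refl hZeq_refl (Sfam := fun k => Sfam (-k))
    (fun k n i => by rw [hSfam, slitCount_image_reflect]) j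
  beta_reduce at h
  rwa [apoly_image_reflect, neg_neg, neg_zero] at h

/-- for a step set with small height variations, if `Z` is the series
(multiple of `t`) with `tZ² - (1-tA₀)Z + tA₁A₋₁ = 0`, then for every `j ≥ 0`,
`A₋₁(x)^j S_j(x;t) = S₀(x;t) Z(x;t)^j` and `A₁(x)^j S₋ⱼ(x;t) = S₀(x;t) Z(x;t)^j`,
where `S_j` is the generating function of walks on the slit plane ending at
ordinate `j`. -/
theorem statement13 (S : Finset Pt)
    (hS : ∀ s ∈ S, |s.2| ≤ 1)
    (Z : PowerSeries L1)
    (hZ0 : PowerSeries.coeff 0 Z = 0)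
    (hZeq : PowerSeries.X * Z ^ 2
        - (1 - PowerSeries.X * PowerSeries.C (Apoly S 0)) * Z
        + PowerSeries.X * PowerSeries.C (Apoly S 1 * Apoly S (-1)) = 0)
    (Sfam : ℤ → PowerSeries L1)
    (hSfam : ∀ (j : ℤ) (n : ℕ) (i : ℤ),
      (PowerSeries.coeff n (Sfam j)).coeff i = (slitCount S n (i, j) : ℚ)) :
    ∀ j : ℕ,
      PowerSeries.C (Apoly S (-1)) ^ j * Sfam j = Sfam 0 * Z ^ j ∧
      PowerSeries.C (Apoly S 1) ^ j * Sfam (-(j : ℤ)) = Sfam 0 * Z ^ j :=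
  statement13_general S hS Z hZeq Sfam hSfam

end SlitPlane
end

section
/- Fix an integer k >= 1. Let B~(t) in Q[[t]] be the generating function for one-dimensional bilateral walks with steps in {-1, k}, i.e. the coefficient of t^n is the number of sequences s_0 = 0, s_1, ..., s_n of integers with s_i - s_{i-1} in {-1, k} and s_n = 0. Let U be the unique power series in Q[[t]] with U(0) = 0 satisfying U = t (1 + U)^{k+1}. Then B~(t) * (1 - k U(t^{k+1})) = 1 + U(t^{k+1}). -/
open scoped Classical

namespace SlitPlane

/-- Number of one-dimensional bilateral walks of length `n` with steps in `{-1, k}`: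
sequences of `n` steps, each equal to `-1` or `k`, whose total sum is `0`. -/
noncomputable def bilat1D (k : ℕ) (n : ℕ) : ℕ :=
  Set.ncard {l : List ℤ | l.length = n ∧ (∀ s ∈ l, s = -1 ∨ s = (k : ℤ)) ∧ l.sum = 0}

/-- The substitution `t ↦ t^(k+1)` in a power series, defined coefficientwise. -/
noncomputable def substPow (k : ℕ) (U : PowerSeries ℚ) : PowerSeries ℚ :=
  PowerSeries.mk fun n =>
    if (k + 1) ∣ n then PowerSeries.coeff (n / (k + 1)) U else 0

/-!
Write `F = 1 + U`, so that `F = 1 + t F^(k+1)`, and `A_r = ∑ₘ C((k+1)m + r, m) tᵐ`.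
A walk of length `n` with steps `-1, k` returns to `0` iff exactly `n/(k+1)` of its steps
equal `k`, so `B~(t) = A_0(t^(k+1))`.
Pascal's rule gives `A_(r+1) = A_r + t A_(r+k+1)`; the family `F^r A_0` obeys the same
recursion, which determines a family from its first member, so `F^r A_0 = A_r`.
The absorption identity `C((k+1)(m+1), m+1) = (k+1) C((k+1)m + k, m)` then reads
`A_0 = 1 + (k+1) t F^k A_0`, which after multiplication by `F` is `A_0 (1 - kU) = 1 + U`.
-/

open Finset

def stepsOfSubset (k : ℕ) {n : ℕ} (S : Finset (Fin n)) : List ℤ :=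
  List.ofFn fun i => if i ∈ S then (k : ℤ) else -1

theorem sum_stepsOfSubset (k : ℕ) {n : ℕ} (S : Finset (Fin n)) :
    (stepsOfSubset k S).sum = (k + 1) * #S - n := by
  have hcard := card_filter_add_card_filter_not (s := (univ : Finset (Fin n))) (· ∈ S)
  simp only [filter_mem_eq_inter, univ_inter, card_univ, Fintype.card_fin] at hcard
  zify at hcard
  rw [stepsOfSubset, List.sum_ofFn, sum_ite, sum_const, sum_const, filter_mem_eq_inter,
    univ_inter, nsmul_eq_mul, nsmul_eq_mul]
  linear_combination -hcard

theorem stepsOfSubset_injective (k n : ℕ) : Function.Injective (stepsOfSubset k (n := n)) := by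
  intro S T h
  ext i
  have hi := congrFun (List.ofFn_inj.mp h) i
  have hk : (k : ℤ) ≠ -1 := by omega
  split_ifs at hi <;> simp_all

theorem bilateral_walks_eq_image (k n : ℕ) :
    {l : List ℤ | l.length = n ∧ (∀ s ∈ l, s = -1 ∨ s = (k : ℤ)) ∧ l.sum = 0} =
      stepsOfSubset k '' {S : Finset (Fin n) | (k + 1) * #S = n} := by
  ext l
  constructor
  · rintro ⟨rfl, hsteps, hsum⟩
    set S := univ.filter fun i : Fin l.length => l[i] = k
    have hl : stepsOfSubset k S = l := by
      conv_rhs => rw [← List.ofFn_getElem (xs := l)]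
      rw [stepsOfSubset]
      congr 1
      funext i
      simp only [S, mem_filter, mem_univ, true_and, Fin.getElem_fin]
      split_ifs with h
      · exact h.symm
      · exact ((hsteps _ (List.getElem_mem _)).resolve_right h).symm
    refine ⟨S, ?_, hl⟩
    have hsumS := sum_stepsOfSubset k S
    rw [hl, hsum] at hsumS
    simp only [Set.mem_ofPred_eq]
    zify
    linarith
  · rintro ⟨S, hS, rfl⟩
    refine ⟨by simp [stepsOfSubset], fun s hs => ?_, ?_⟩
    · obtain ⟨i, rfl⟩ := List.mem_ofFn.mp hs
      split_ifs <;> simp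
    · rw [sum_stepsOfSubset, sub_eq_zero]
      exact_mod_cast hS

theorem bilat1D_eq (k n : ℕ) :
    bilat1D k n = if (k + 1) ∣ n then n.choose (n / (k + 1)) else 0 := by
  rw [bilat1D, bilateral_walks_eq_image,
    Set.ncard_image_of_injective _ (stepsOfSubset_injective k n)]
  split_ifs with h
  · obtain ⟨m, rfl⟩ := h
    have hsets : {S : Finset (Fin ((k + 1) * m)) | (k + 1) * #S = (k + 1) * m} =
        (powersetCard m (univ : Finset (Fin ((k + 1) * m))) : Set _) := by
      ext S
      simp
    rw [hsets, Set.ncard_coe_finset, card_powersetCard, card_univ, Fintype.card_fin,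
      Nat.mul_div_cancel_left _ k.succ_pos]
  · have hsets : {S : Finset (Fin n) | (k + 1) * #S = n} = ∅ :=
      Set.eq_empty_of_forall_notMem fun S hS => h ⟨#S, hS.symm⟩
    rw [hsets, Set.ncard_empty]

theorem mul_add_one_choose_add_one (k m : ℕ) :
    ((k + 1) * (m + 1)).choose (m + 1) = (k + 1) * ((k + 1) * m + k).choose m := by
  have h := Nat.add_one_mul_choose_eq ((k + 1) * m + k) m
  rw [show (k + 1) * m + k + 1 = (k + 1) * (m + 1) by ring] at h
  exact Nat.eq_of_mul_eq_mul_right (by omega : 0 < m + 1) (by rw [← h]; ring)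

open PowerSeries

noncomputable def binomSeries (R : Type*) [CommRing R] (k r : ℕ) : R⟦X⟧ :=
  mk fun m => (((k + 1) * m + r).choose m : R)

section binomSeries

variable {R : Type*} [CommRing R]

theorem binomSeries_succ (k r : ℕ) :
    binomSeries R k (r + 1) = binomSeries R k r + X * binomSeries R k (r + k + 1) := by
  ext (_ | m)
  · simp [binomSeries]
  · have h : (k + 1) * m + (r + k + 1) = (k + 1) * (m + 1) + r := by ring
    simp only [binomSeries, map_add, coeff_mk, coeff_succ_X_mul]
    rw [h, ← add_assoc, Nat.choose_succ_succ', Nat.cast_add, add_comm]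

theorem binomSeries_zero_eq (k : ℕ) :
    binomSeries R k 0 = 1 + (k + 1 : R⟦X⟧) * X * binomSeries R k k := by
  ext (_ | m)
  · simp [binomSeries]
  · rw [map_add, ← Nat.cast_succ, ← map_natCast (C (R := R)), mul_assoc, coeff_C_mul,
      coeff_succ_X_mul, coeff_one, if_neg m.succ_ne_zero, zero_add]
    simp [binomSeries, mul_add_one_choose_add_one]

theorem eq_of_forall_succ_eq_add_X_mul {k : ℕ} {G H : ℕ → R⟦X⟧}
    (hG : ∀ r, G (r + 1) = G r + X * G (r + k + 1))
    (hH : ∀ r, H (r + 1) = H r + X * H (r + k + 1)) (h0 : G 0 = H 0) : G = H := by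
  suffices ∀ m r, coeff m (G r) = coeff m (H r) from funext fun r => ext fun m => this m r
  intro m
  induction m using Nat.strong_induction_on with
  | _ m ih =>
    intro r
    induction r with
    | zero => rw [h0]
    | succ r ihr =>
      rw [hG, hH]
      cases m with
      | zero => simpa using ihr
      | succ m => simp only [map_add, coeff_succ_X_mul, ihr, ih m m.lt_succ_self]

theorem pow_mul_binomSeries_zero {k : ℕ} {F : R⟦X⟧} (hF : F = 1 + X * F ^ (k + 1)) (r : ℕ) :
    F ^ r * binomSeries R k 0 = binomSeries R k r := by
  refine congrFun (eq_of_forall_succ_eq_add_X_mul (G := fun r => F ^ r * binomSeries R k 0)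
    (fun r => ?_) (binomSeries_succ k) (by simp)) r
  linear_combination (F ^ r * binomSeries R k 0) * hF

theorem binomSeries_zero_mul {k : ℕ} {U : R⟦X⟧} (hU : U = X * (1 + U) ^ (k + 1)) :
    binomSeries R k 0 * (1 - k * U) = 1 + U := by
  have hF : 1 + U = 1 + X * (1 + U) ^ (k + 1) := by rw [← hU]
  have h := binomSeries_zero_eq (R := R) k
  rw [← pow_mul_binomSeries_zero hF k] at h
  linear_combination (1 + U) * h - (k + 1) * binomSeries R k 0 * hU

end binomSeries

theorem substPow_eq_expand (k : ℕ) (U : ℚ⟦X⟧) :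
    substPow k U = expand (k + 1) k.succ_ne_zero U := by
  ext n
  rw [substPow, coeff_mk, coeff_expand]

theorem statement18_general (k : ℕ)
    (U : PowerSeries ℚ)
    (hUeq : U = PowerSeries.X * (1 + U) ^ (k + 1))
    (B : PowerSeries ℚ)
    (hB : ∀ n : ℕ, PowerSeries.coeff n B = (bilat1D k n : ℚ)) :
    B * (1 - (k : PowerSeries ℚ) * substPow k U) = 1 + substPow k U := by
  have hB_expand : B = expand (k + 1) k.succ_ne_zero (binomSeries ℚ k 0) := by
    ext n
    rw [hB, bilat1D_eq, coeff_expand]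
    split_ifs with h
    · simp [binomSeries, Nat.mul_div_cancel' h]
    · simp
  rw [hB_expand, substPow_eq_expand]
  simpa using congrArg (expand (k + 1) k.succ_ne_zero) (binomSeries_zero_mul hUeq)

/-- let `U` be the power series with `U(0) = 0` and
`U = t(1+U)^(k+1)`; then the generating function `B~(t)` of one-dimensional
bilateral walks with steps in `{-1, k}` satisfies
`B~(t)(1 - k U(t^(k+1))) = 1 + U(t^(k+1))`. -/
theorem statement18 (k : ℕ) (hk : 1 ≤ k)
    (U : PowerSeries ℚ)
    (hU0 : PowerSeries.coeff 0 U = 0)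
    (hUeq : U = PowerSeries.X * (1 + U) ^ (k + 1))
    (B : PowerSeries ℚ)
    (hB : ∀ n : ℕ, PowerSeries.coeff n B = (bilat1D k n : ℚ)) :
    B * (1 - (k : PowerSeries ℚ) * substPow k U) = 1 + substPow k U :=
  statement18_general k U hUeq B hB

end SlitPlane
end
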